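/- arXiv:1606.04802 — 5 statements merged into one kernel-verified Lean document; each statement's English description precedes it below -/
import Mathlib

section
/- Let B be a symmetric positive definite n×n real matrix and S a symmetric positive semi-definite n×n real matrix. Let S⁻ denote the Moore–Penrose pseudoinverse of S. If the null space of S is nontrivial or not, but S ≠ 0, then tr(S⁻ S) - tr((B + S)⁻¹ S) ≥ 0, i.e., tr(S⁻ S) ≥ tr((B + S)⁻¹ S). -/
open Matrix
/-- The four Penrose conditions characterizing the Moore–Penrose pseudoinverse. -/
def IsMoorePenrose {n : Type*} [Fintype n] [DecidableEq n] (S Si : Matrix n n ℝ) : Prop :=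
  S * Si * S = S ∧ Si * S * Si = Si ∧ (S * Si)ᵀ = S * Si ∧ (Si * S)ᵀ = Si * S

lemma aux_trace_nonneg {n : Type*} [Fintype n] [DecidableEq n] {M : Matrix n n ℝ}
    (hM : M.PosSemidef) : 0 ≤ M.trace := by
  rw [Matrix.trace]
  refine Finset.sum_nonneg fun i _ => ?_
  exact hM.diag_nonneg

/-- For B symmetric positive definite, S symmetric positive semidefinite, S ≠ 0,
tr(S⁻ S) ≥ tr((B+S)⁻¹ S). -/
theorem stmt_0 {n : Type*} [Fintype n] [DecidableEq n]
    (B S Si : Matrix n n ℝ) (hB : B.PosDef) (hS : S.PosSemidef) (hS0 : S ≠ 0)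
    (hSi : IsMoorePenrose S Si) :
    Matrix.trace (((B + S)⁻¹) * S) ≤ Matrix.trace (Si * S) := by
  obtain ⟨h1, h2, h3, h4⟩ := hSi
  set A := B + S with hAdef
  have hA : A.PosDef := hB.add_posSemidef hS
  have hAinv : A * A⁻¹ = 1 :=
    Matrix.mul_nonsing_inv A ((Matrix.isUnit_iff_isUnit_det A).mp hA.isUnit)
  have hSsym : Sᵀ = S := by
    exact (Matrix.isHermitian_iff_isSymm.mp hS.isHermitian).eq
  set P := Si * S with hPdef
  have hPsym : Pᵀ = P := h4
  have hSP : S * P = S := by rw [hPdef, ← mul_assoc, h1]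
  have hPS : P * S = S := by
    have := congrArg Matrix.transpose hSP
    simpa [Matrix.transpose_mul, hPsym, hSsym] using this
  have hPP : P * P = P := by rw [hPdef, ← mul_assoc, h2]
  set sq := (by open scoped MatrixOrder in exact CFC.sqrt S : Matrix n n ℝ) with hsqdef
  have hsqPSD : sq.PosSemidef := by open scoped MatrixOrder in exact (CFC.sqrt_nonneg S).posSemidef
  have hss : sq * sq = S := by open scoped MatrixOrder in exact CFC.sqrt_mul_sqrt_self S hS.nonneg
  have hsqsym : sqᵀ = sq := by
    exact (Matrix.isHermitian_iff_isSymm.mp hsqPSD.isHermitian).eq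
  -- P * sq = sq
  have hPsq : P * sq = sq := by
    have key : (P * sq - sq) * (P * sq - sq)ᵀ = 0 := by
      have expand : (P * sq - sq) * (sq * P - sq)
          = P * (sq * sq) * P - P * (sq * sq) - sq * sq * P + sq * sq := by noncomm_ring
      rw [Matrix.transpose_sub, Matrix.transpose_mul, hsqsym, hPsym, expand, hss, hPS, hSP]
      abel
    have key2 : (P * sq - sq) * (P * sq - sq)ᴴ = 0 := by
      rwa [Matrix.conjTranspose_eq_transpose_of_trivial]
    have h0 := Matrix.self_mul_conjTranspose_eq_zero.mp key2
    have := sub_eq_zero.mp h0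
    exact this
  have hsqP : sq * P = sq := by
    have := congrArg Matrix.transpose hPsq
    simpa [Matrix.transpose_mul, hPsym, hsqsym] using this
  set K := sq * A⁻¹ * sq with hKdef
  have hPK : P * K = K := by rw [hKdef, ← mul_assoc, ← mul_assoc, hPsq]
  have hKP : K * P = K := by rw [hKdef, mul_assoc, hsqP]
  have hAiT : (A⁻¹)ᵀ = A⁻¹ := by
    exact (Matrix.isHermitian_iff_isSymm.mp hA.isHermitian.inv).eq
  have hKsym : Kᵀ = K := by
    rw [hKdef, Matrix.transpose_mul, Matrix.transpose_mul, hsqsym, hAiT, mul_assoc]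
  -- 1 - K is PSD
  have h1K : (1 - K).PosSemidef := by
    refine Matrix.posSemidef_iff_dotProduct_mulVec.mpr ⟨?_, ?_⟩
    · show (1 - K)ᴴ = 1 - K
      rw [Matrix.conjTranspose_eq_transpose_of_trivial, Matrix.transpose_sub,
        Matrix.transpose_one, hKsym]
    · intro x
      rw [star_trivial, Matrix.sub_mulVec, dotProduct_sub, Matrix.one_mulVec, sub_nonneg]
      set z : n → ℝ := A⁻¹ *ᵥ (sq *ᵥ x) with hzdef
      set w : n → ℝ := sq *ᵥ z with hwdef
      have hKx : K *ᵥ x = w := by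
        rw [hKdef, ← Matrix.mulVec_mulVec, ← Matrix.mulVec_mulVec]
      have hy : sq *ᵥ x = A *ᵥ z := by
        rw [hzdef, Matrix.mulVec_mulVec, hAinv, Matrix.one_mulVec]
      have hqz : x ⬝ᵥ w = z ⬝ᵥ (B *ᵥ z) + z ⬝ᵥ (S *ᵥ z) := by
        calc x ⬝ᵥ w = (x ᵥ* sq) ⬝ᵥ z := by rw [hwdef, Matrix.dotProduct_mulVec]
        _ = (sq *ᵥ x) ⬝ᵥ z := by rw [← Matrix.mulVec_transpose, hsqsym]
        _ = (A *ᵥ z) ⬝ᵥ z := by rw [hy]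
        _ = z ⬝ᵥ (A *ᵥ z) := dotProduct_comm _ _
        _ = z ⬝ᵥ (B *ᵥ z) + z ⬝ᵥ (S *ᵥ z) := by
            rw [hAdef, Matrix.add_mulVec, dotProduct_add]
      have hw : z ⬝ᵥ (S *ᵥ z) = w ⬝ᵥ w := by
        have hsw : sq *ᵥ w = S *ᵥ z := by
          rw [hwdef, Matrix.mulVec_mulVec z sq sq, hss]
        calc z ⬝ᵥ (S *ᵥ z) = z ⬝ᵥ (sq *ᵥ w) := by rw [hsw]
        _ = (z ᵥ* sq) ⬝ᵥ w := by rw [Matrix.dotProduct_mulVec]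
        _ = (sq *ᵥ z) ⬝ᵥ w := by rw [← Matrix.mulVec_transpose, hsqsym]
        _ = w ⬝ᵥ w := by rw [hwdef]
      have hBz : 0 ≤ z ⬝ᵥ (B *ᵥ z) := by simpa using hB.posSemidef.dotProduct_mulVec_nonneg z
      have hW : w ⬝ᵥ w ≤ x ⬝ᵥ w := by rw [hqz, hw]; linarith
      have hCS : (x ⬝ᵥ w) ^ 2 ≤ (x ⬝ᵥ x) * (w ⬝ᵥ w) := by
        simpa [dotProduct, pow_two] using
          Finset.sum_mul_sq_le_sq_mul_sq Finset.univ x w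
      have hX : 0 ≤ x ⬝ᵥ x := Finset.sum_nonneg fun i _ => mul_self_nonneg _
      have hW0 : 0 ≤ w ⬝ᵥ w := Finset.sum_nonneg fun i _ => mul_self_nonneg _
      rw [hKx]
      nlinarith [hCS, hW, hX, hW0]
  -- P - K is PSD
  have hPmK : (P - K).PosSemidef := by
    have := h1K.conjTranspose_mul_mul_same P
    have hEq : Pᴴ * (1 - K) * P = P - K := by
      rw [Matrix.conjTranspose_eq_transpose_of_trivial, hPsym, mul_sub, mul_one, sub_mul,
        hPP, mul_assoc, hKP, hPK]
    rwa [hEq] at this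
  -- conclude via traces
  have htr : Matrix.trace (A⁻¹ * S) = Matrix.trace K := by
    calc Matrix.trace (A⁻¹ * S) = Matrix.trace (A⁻¹ * sq * sq) := by rw [mul_assoc, hss]
    _ = Matrix.trace (sq * (A⁻¹ * sq)) := Matrix.trace_mul_comm _ _
    _ = Matrix.trace K := by rw [hKdef, mul_assoc]
  have h0 : 0 ≤ Matrix.trace (P - K) := aux_trace_nonneg hPmK
  rw [Matrix.trace_sub] at h0
  rw [htr]
  linarith
end

section
/- Let B be a symmetric positive definite n×n real matrix, and let S_λ be a symmetric positive semi-definite matrix depending on a parameter vector λ with all entries positive, such that the null space of S_λ is independent of λ. Let S_j be the partial derivative of S_λ with respect to λ_j, assumed symmetric positive semi-definite and nonzero. Then tr(S_λ⁻ S_j) - tr((B + S_λ)⁻¹ S_j) > 0, where S_λ⁻ is the Moore–Penrose pseudoinverse of S_λ. -/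
open Matrix

section aux
variable {n : Type*} [Fintype n] [DecidableEq n]

lemma aux_smul_posSemidef {c : ℝ} (hc : 0 ≤ c) {M : Matrix n n ℝ} (hM : M.PosSemidef) :
    (c • M).PosSemidef := by
  refine ⟨?_, fun x => ?_⟩
  · show (c • M)ᴴ = c • M
    rw [Matrix.conjTranspose_smul, hM.1.eq]
    simp
  · exact (hM.smul hc).2 x

lemma aux_diag_form (A N : Matrix n n ℝ) (i : n) :
    (A * N * Aᵀ) i i = (A i) ⬝ᵥ N.mulVec (A i) := by
  simp only [Matrix.mul_apply, Matrix.transpose_apply, dotProduct, Matrix.mulVec,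
    Finset.sum_mul, Finset.mul_sum]
  rw [Finset.sum_comm]
  refine Finset.sum_congr rfl fun k _ => Finset.sum_congr rfl fun l _ => by ring

lemma aux_dot_sandwich (Sl N : Matrix n n ℝ) (y : n → ℝ) :
    (Sl.mulVec y) ⬝ᵥ N.mulVec (Sl.mulVec y) = y ⬝ᵥ (Slᵀ * N * Sl).mulVec y := by
  rw [Matrix.dotProduct_mulVec, Matrix.vecMul_mulVec, ← Matrix.dotProduct_mulVec,
    Matrix.mulVec_mulVec]

end aux

/-- Theorem 1 of the paper: with S_λ = Σ_j λ_j S_j, λ_j > 0, S_j symmetric PSD,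
null space of S_λ independent of λ (ker S_λ ⊆ ker S_j), S_j ≠ 0, and B positive definite:
tr(S_λ⁻ S_j) - tr((B + S_λ)⁻¹ S_j) > 0. -/
theorem stmt_1 {n m : Type*} [Fintype n] [DecidableEq n] [Fintype m]
    (B : Matrix n n ℝ) (hB : B.PosDef)
    (lam : m → ℝ) (hlam : ∀ j, 0 < lam j)
    (Smat : m → Matrix n n ℝ) (hSm : ∀ j, (Smat j).PosSemidef)
    (Slam Si : Matrix n n ℝ) (hSlam : Slam = ∑ j, lam j • Smat j)
    (hker : ∀ (j : m) (x : n → ℝ), Slam.mulVec x = 0 → (Smat j).mulVec x = 0)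
    (hSi : IsMoorePenrose Slam Si)
    (j : m) (hj : Smat j ≠ 0) :
    0 < Matrix.trace (Si * Smat j) - Matrix.trace (((B + Slam)⁻¹) * Smat j) := by
  obtain ⟨pen1, pen2, pen3, pen4⟩ := hSi
  have hSlamPSD : Slam.PosSemidef := by
    rw [hSlam]
    refine Finset.sum_induction _ _ (fun a b ha hb => ha.add hb) Matrix.PosSemidef.zero
      (fun i _ => aux_smul_posSemidef (hlam i).le (hSm i))
  have hSlamSym : Slamᵀ = Slam := by
    rw [← Matrix.conjTranspose_eq_transpose_of_trivial]
    exact hSlamPSD.1.eq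
  have hSjsym : (Smat j)ᵀ = Smat j := by
    rw [← Matrix.conjTranspose_eq_transpose_of_trivial]
    exact (hSm j).1.eq
  have hBsym : Bᵀ = B := by
    rw [← Matrix.conjTranspose_eq_transpose_of_trivial]
    exact hB.1.eq
  set C := B + Slam with hCdef
  have hC : C.PosDef := hB.add_posSemidef hSlamPSD
  have hCun : IsUnit C.det := isUnit_iff_ne_zero.2 hC.det_pos.ne'
  have hCi : C * C⁻¹ = 1 := Matrix.mul_nonsing_inv C hCun
  have hCinvPD : (C⁻¹).PosDef := hC.inv
  have hiC : C⁻¹ * C = 1 := Matrix.nonsing_inv_mul C hCun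
  have hCinvSym : (C⁻¹)ᵀ = C⁻¹ := by
    rw [← Matrix.conjTranspose_eq_transpose_of_trivial]
    exact hCinvPD.1.eq
  set M : Matrix n n ℝ := Slam - Slam * C⁻¹ * Slam with hMdef
  have hBeq : B = C - Slam := by rw [hCdef, add_sub_cancel_right]
  have e1 : B * C⁻¹ * Slam = M := by
    rw [hMdef, hBeq, sub_mul, sub_mul, hCi, one_mul]
  have e2 : Slam * C⁻¹ * B = M := by
    rw [hMdef, hBeq, mul_sub, Matrix.mul_assoc Slam C⁻¹ C, hiC, mul_one]
  have hMsplit : (B * C⁻¹) * Slam * (C⁻¹ * B) + (Slam * C⁻¹) * B * (C⁻¹ * Slam) = M := by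
    have h1 : (B * C⁻¹) * Slam * (C⁻¹ * B) = M * (C⁻¹ * B) := by rw [← e1]
    have h2 : (Slam * C⁻¹) * B * (C⁻¹ * Slam) = M * (C⁻¹ * Slam) := by rw [← e2]
    rw [h1, h2, ← mul_add, ← mul_add, ← hCdef, hiC, mul_one]
  have hMPSD : M.PosSemidef := by
    rw [← hMsplit]
    refine Matrix.PosSemidef.add ?_ ?_
    · have h := hSlamPSD.mul_mul_conjTranspose_same (B * C⁻¹)
      have ht : (B * C⁻¹)ᴴ = C⁻¹ * B := by
        rw [Matrix.conjTranspose_eq_transpose_of_trivial, Matrix.transpose_mul, hCinvSym, hBsym]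
      rwa [ht] at h
    · have h := hB.posSemidef.mul_mul_conjTranspose_same (Slam * C⁻¹)
      have ht : (Slam * C⁻¹)ᴴ = C⁻¹ * Slam := by
        rw [Matrix.conjTranspose_eq_transpose_of_trivial, Matrix.transpose_mul, hCinvSym, hSlamSym]
      rwa [ht] at h
  -- decompose Smat j as Aᵀ * A
  obtain ⟨A, hA⟩ : ∃ A : Matrix n n ℝ, Smat j = Aᴴ * A := by
    open scoped MatrixOrder in exact CStarAlgebra.nonneg_iff_eq_star_mul_self.mp (hSm j).nonneg
  have hA' : Smat j = Aᵀ * A := by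
    rwa [Matrix.conjTranspose_eq_transpose_of_trivial] at hA
  set Q : Matrix n n ℝ := Si * Slam with hQdef
  have hQsym : Qᵀ = Q := pen4
  have hSlamQ : Slam * Q = Slam := by rw [hQdef, ← Matrix.mul_assoc, pen1]
  have hz : Slam * (1 - Q) = 0 := by rw [mul_sub, mul_one, hSlamQ, sub_self]
  have hSjQ : Smat j * Q = Smat j := by
    have h0 : Smat j * (1 - Q) = 0 := by
      ext i k
      have hx : Slam.mulVec ((1 - Q).mulVec (Pi.single k 1)) = 0 := by
        rw [Matrix.mulVec_mulVec, hz, Matrix.zero_mulVec]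
      have h1 := hker j _ hx
      rw [Matrix.mulVec_mulVec] at h1
      have h2 := congrFun h1 i
      simpa [Matrix.mulVec_single] using h2
    rw [mul_sub, mul_one] at h0
    exact (sub_eq_zero.mp h0).symm
  have hQSj : Q * Smat j = Smat j := by
    have h := congrArg Matrix.transpose hSjQ
    rwa [Matrix.transpose_mul, hQsym, hSjsym] at h
  have hAQ : A * Q = A := by
    have hQt : (1 - Q)ᵀ = 1 - Q := by rw [Matrix.transpose_sub, Matrix.transpose_one, hQsym]
    have h0 : (A * (1 - Q))ᴴ * (A * (1 - Q)) = 0 := by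
      rw [Matrix.conjTranspose_eq_transpose_of_trivial, Matrix.transpose_mul, hQt]
      calc (1 - Q) * Aᵀ * (A * (1 - Q)) = (1 - Q) * (Aᵀ * A) * (1 - Q) := by
            rw [Matrix.mul_assoc, Matrix.mul_assoc, Matrix.mul_assoc]
        _ = ((1 - Q) * Smat j) * (1 - Q) := by rw [← hA']
        _ = 0 := by rw [sub_mul, one_mul, hQSj, sub_self, Matrix.zero_mul]
    have h1 : A * (1 - Q) = 0 := Matrix.conjTranspose_mul_self_eq_zero.mp h0
    rw [mul_sub, mul_one] at h1
    exact (sub_eq_zero.mp h1).symm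
  -- rows of A lie in the range of Slam
  set y : n → n → ℝ := fun i => Siᵀ.mulVec (A i) with hydef
  have ha : ∀ i, Slam.mulVec (y i) = A i := by
    intro i
    have h1 : ∀ k, A i k = (Qᵀ.mulVec (A i)) k := by
      intro k
      conv_lhs => rw [← hAQ]
      simp only [Matrix.mul_apply, Matrix.mulVec, Matrix.transpose_apply, dotProduct]
      exact Finset.sum_congr rfl fun l _ => mul_comm _ _
    have h2 : Qᵀ.mulVec (A i) = Slam.mulVec (y i) := by
      rw [hQdef, Matrix.transpose_mul, hSlamSym, hydef, ← Matrix.mulVec_mulVec]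
    funext k
    rw [← h2, ← h1 k]
  -- trace identities
  have htr : ∀ N : Matrix n n ℝ, Matrix.trace (N * Smat j) = ∑ i, (A i) ⬝ᵥ N.mulVec (A i) := by
    intro N
    rw [hA', ← Matrix.mul_assoc, Matrix.trace_mul_cycle]
    rw [Matrix.trace]
    exact Finset.sum_congr rfl fun i _ => aux_diag_form A N i
  have key : Matrix.trace (Si * Smat j) - Matrix.trace (C⁻¹ * Smat j)
      = ∑ i, (y i) ⬝ᵥ M.mulVec (y i) := by
    rw [htr, htr, ← Finset.sum_sub_distrib]
    refine Finset.sum_congr rfl fun i _ => ?_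
    rw [← ha i, aux_dot_sandwich Slam Si (y i), aux_dot_sandwich Slam C⁻¹ (y i),
      hSlamSym, pen1, hMdef, Matrix.sub_mulVec, dotProduct_sub]
  rw [key]
  -- positivity of each term
  have hnonneg : ∀ i, (0:ℝ) ≤ (y i) ⬝ᵥ M.mulVec (y i) := by
    intro i
    have h := hMPSD.dotProduct_mulVec_nonneg (y i)
    simpa using h
  -- A has a nonzero row
  have hAne : A ≠ 0 := by
    intro h
    apply hj
    rw [hA', h]
    simp
  obtain ⟨i0, k0, hik⟩ : ∃ i k, A i k ≠ 0 := by
    by_contra h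
    push_neg at h
    exact hAne (by ext i k; simpa using h i k)
  have hrow : A i0 ≠ 0 := fun h => hik (by rw [h]; rfl)
  refine Finset.sum_pos' (fun i _ => hnonneg i) ⟨i0, Finset.mem_univ i0, ?_⟩
  rcases lt_or_eq_of_le (hnonneg i0) with h | h
  · exact h
  · exfalso
    have h0 : star (y i0) ⬝ᵥ M.mulVec (y i0) = 0 := by simpa using h.symm
    have hMy : M.mulVec (y i0) = 0 := (hMPSD.dotProduct_mulVec_zero_iff (y i0)).mp h0
    rw [← e1, ← Matrix.mulVec_mulVec, ← Matrix.mulVec_mulVec, ha i0] at hMy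
    have hzne : C⁻¹ *ᵥ A i0 = 0 := by
      by_contra hzne
      have hp := hB.dotProduct_mulVec_pos hzne
      rw [hMy] at hp
      simp at hp
    have hzero : A i0 = 0 := by
      have h3 : C *ᵥ (C⁻¹ *ᵥ A i0) = A i0 := by
        rw [Matrix.mulVec_mulVec, hCi, Matrix.one_mulVec]
      rw [hzne, Matrix.mulVec_zero] at h3
      exact h3.symm
    exact hrow hzero
end

section
/- Let S be a symmetric positive semi-definite matrix with spectral decomposition S = V D Vᵀ (V orthogonal, D diagonal with nonnegative entries), and let T be symmetric positive semi-definite with ker S ⊆ ker T. Let s_i = (Vᵀ T V)_{ii}. Then s_i = 0 whenever D_{ii} = 0, and tr(S⁻ T) = Σ_{i : s_i ≠ 0} s_i / D_{ii}, while tr((I + S)⁻¹ T) = Σ_{i : s_i ≠ 0} s_i / (D_{ii} + 1). In particular, if T ≠ 0 then tr(S⁻ T) > tr((I + S)⁻¹ T). -/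
open Matrix

/-- Let S = V D Vᵀ (V orthogonal, D = diagonal d with d ≥ 0), T symmetric PSD with
ker S ⊆ ker T, s_i = (Vᵀ T V)_{ii}, and S⁻ = V D⁻ Vᵀ the Moore–Penrose pseudoinverse. Then
s_i = 0 whenever d_i = 0, tr(S⁻ T) = Σ_{s_i ≠ 0} s_i/d_i, tr((I+S)⁻¹ T) = Σ_{s_i ≠ 0} s_i/(d_i+1),
and if T ≠ 0 then tr(S⁻ T) > tr((I+S)⁻¹ T). -/
theorem stmt_4 {n : Type*} [Fintype n] [DecidableEq n]
    (S T V Si : Matrix n n ℝ) (d : n → ℝ)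
    (hV : Vᵀ * V = 1) (hV' : V * Vᵀ = 1)
    (hd : ∀ i, 0 ≤ d i)
    (hS : S = V * Matrix.diagonal d * Vᵀ)
    (hT : T.PosSemidef)
    (hker : ∀ x : n → ℝ, S.mulVec x = 0 → T.mulVec x = 0)
    (hSi : Si = V * Matrix.diagonal (fun i => if d i = 0 then 0 else (d i)⁻¹) * Vᵀ)
    (s : n → ℝ) (hs : ∀ i, s i = (Vᵀ * T * V) i i) :
    (∀ i, d i = 0 → s i = 0) ∧
    Matrix.trace (Si * T) = ∑ i ∈ Finset.univ.filter (fun i => s i ≠ 0), s i / d i ∧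
    Matrix.trace (((1 + S)⁻¹) * T) =
      ∑ i ∈ Finset.univ.filter (fun i => s i ≠ 0), s i / (d i + 1) ∧
    (T ≠ 0 → Matrix.trace (((1 + S)⁻¹) * T) < Matrix.trace (Si * T)) := by
  classical
  set M : Matrix n n ℝ := Vᵀ * T * V with hM
  have hMpsd : M.PosSemidef := by
    have := hT.mul_mul_conjTranspose_same Vᵀ
    simpa [hM, Matrix.conjTranspose_eq_transpose_of_trivial, Matrix.mul_assoc] using this
  have hs0 : ∀ i, 0 ≤ s i := by
    intro i
    rw [hs i]
    have := hMpsd.dotProduct_mulVec_nonneg (Pi.single i 1)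
    simpa [Matrix.mulVec, dotProduct, Pi.single_apply, hM, mul_comm] using this
  -- claim 1
  have claim1 : ∀ i, d i = 0 → s i = 0 := by
    intro i hdi
    set x : n → ℝ := fun j => V j i with hx
    have hSV : S * V = V * Matrix.diagonal d := by
      rw [hS, Matrix.mul_assoc, Matrix.mul_assoc, hV, Matrix.mul_one]
    have hSx : S.mulVec x = 0 := by
      funext j
      have : S.mulVec x j = (S * V) j i := by
        simp [Matrix.mulVec, Matrix.mul_apply, dotProduct, hx]
      rw [this, hSV, Matrix.mul_diagonal, hdi, mul_zero]
      rfl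
    have hTx := hker x hSx
    have hcol : ∀ k, (T * V) k i = T.mulVec x k := by
      intro k; simp [Matrix.mul_apply, Matrix.mulVec, dotProduct, hx]
    rw [hs i]
    calc (Vᵀ * T * V) i i = ∑ k, V k i * (T * V) k i := by
          rw [Matrix.mul_assoc]
          simp [Matrix.mul_apply, Matrix.transpose_apply]
      _ = ∑ k, V k i * T.mulVec x k := by simp_rw [hcol]
      _ = 0 := by rw [hTx]; simp
  -- generic trace lemma
  have htr : ∀ v : n → ℝ, Matrix.trace ((V * Matrix.diagonal v * Vᵀ) * T)
      = ∑ i, M i i * v i := by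
    intro v
    have h1 : (V * Matrix.diagonal v * Vᵀ) * T = (V * Matrix.diagonal v) * (Vᵀ * T) := by
      rw [Matrix.mul_assoc]
    rw [h1, Matrix.trace_mul_comm, ← Matrix.mul_assoc, ← hM]
    rw [Matrix.trace]
    congr 1
    funext i
    simp [Matrix.diag, Matrix.mul_diagonal]
  have hsd : ∀ i, s i ≠ 0 → d i ≠ 0 := fun i h hd0 => h (claim1 i hd0)
  have trace2 : Matrix.trace (Si * T)
      = ∑ i ∈ Finset.univ.filter (fun i => s i ≠ 0), s i / d i := by
    rw [hSi, htr, Finset.sum_filter]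
    apply Finset.sum_congr rfl
    intro i _
    by_cases h : s i = 0
    · simp [← hs i, h]
    · rw [if_neg (hsd i h), if_pos h, ← hs i, div_eq_mul_inv]
  -- inverse of 1 + S
  have hpos : ∀ i, (0:ℝ) < d i + 1 := fun i => by linarith [hd i]
  have h1S : 1 + S = V * Matrix.diagonal (fun i => d i + 1) * Vᵀ := by
    have : Matrix.diagonal (fun i => d i + 1) = Matrix.diagonal d + 1 := by
      rw [← Matrix.diagonal_one, Matrix.diagonal_add]
    rw [this, Matrix.mul_add, Matrix.add_mul, Matrix.mul_one, hV', hS, add_comm]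
  have hinv : (1 + S)⁻¹ = V * Matrix.diagonal (fun i => (d i + 1)⁻¹) * Vᵀ := by
    apply Matrix.inv_eq_right_inv
    have hmul : ∀ A B : Matrix n n ℝ, (V*A*Vᵀ)*(V*B*Vᵀ) = V*(A*B)*Vᵀ := by
      intro A B
      simp only [Matrix.mul_assoc]
      rw [← Matrix.mul_assoc Vᵀ V (B*Vᵀ), hV, Matrix.one_mul]
    rw [h1S, hmul, Matrix.diagonal_mul_diagonal]
    have : (fun i => (d i + 1) * (d i + 1)⁻¹) = fun _ => (1:ℝ) := by
      funext i; exact mul_inv_cancel₀ (hpos i).ne'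
    rw [this, Matrix.diagonal_one, Matrix.mul_one, hV']
  have trace3 : Matrix.trace ((1 + S)⁻¹ * T)
      = ∑ i ∈ Finset.univ.filter (fun i => s i ≠ 0), s i / (d i + 1) := by
    rw [hinv, htr, Finset.sum_filter]
    apply Finset.sum_congr rfl
    intro i _
    by_cases h : s i = 0
    · rw [if_neg (by simpa using h), ← hs i, h, zero_mul]
    · rw [if_pos h, ← hs i, div_eq_mul_inv]
  refine ⟨claim1, trace2, trace3, ?_⟩
  intro hT0
  rw [trace2, trace3]
  apply Finset.sum_lt_sum_of_nonempty
  · -- nonempty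
    by_contra hemp
    apply hT0
    have hall : ∀ i, s i = 0 := by
      intro i
      by_contra h
      exact hemp ⟨i, Finset.mem_filter.mpr ⟨Finset.mem_univ i, h⟩⟩
    have hM0 : M = 0 := by
      have hcol : ∀ i, M *ᵥ Pi.single i 1 = 0 := by
        intro i
        apply (hMpsd.dotProduct_mulVec_zero_iff _).mp
        have : star (Pi.single i 1 : n → ℝ) ⬝ᵥ M *ᵥ Pi.single i 1 = M i i := by
          simp [Matrix.mulVec, dotProduct, Pi.single_apply, mul_comm]
        rw [this, ← hs i, hall i]
      funext j k
      have := congrFun (hcol k) j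
      simpa [Matrix.mulVec, dotProduct, Pi.single_apply] using this
    have : T = V * M * Vᵀ := by
      rw [hM, ← Matrix.mul_assoc, ← Matrix.mul_assoc, hV', Matrix.one_mul,
        Matrix.mul_assoc, hV', Matrix.mul_one]
    rw [this, hM0, Matrix.mul_zero, Matrix.zero_mul]
  · intro i hi
    have hsi : s i ≠ 0 := (Finset.mem_filter.mp hi).2
    have hsip : 0 < s i := lt_of_le_of_ne (hs0 i) (Ne.symm hsi)
    have hdip : 0 < d i := lt_of_le_of_ne (hd i) (Ne.symm (hsd i hsi))
    exact div_lt_div_of_pos_left hsip hdip (by linarith)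
end

section
/- Let S_λ = Σ_j λ_j S_j with each S_j symmetric positive semi-definite, λ_j > 0, and the null space of S_λ independent of λ (ker S_λ ⊆ ker S_j for all j). Then the derivative of log|S_λ|_+ (log of the product of nonzero eigenvalues, i.e., pseudo-determinant) with respect to λ_j equals tr(S_λ⁻ S_j), where S_λ⁻ is the Moore–Penrose pseudoinverse. -/
open Matrix
open Polynomial

/-- Log pseudo-determinant: for a symmetric positive semidefinite matrix the absolute value of the
lowest-order nonzero coefficient of the characteristic polynomial (coefficient of x^(n - rank))
equals the product of the nonzero eigenvalues. -/
noncomputable def logpdet {p : Type*} [Fintype p] [DecidableEq p] (A : Matrix p p ℝ) : ℝ :=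
  Real.log |A.charpoly.coeff (Fintype.card p - A.rank)|

lemma mp_unique {n : Type*} [Fintype n] [DecidableEq n] {S X Y : Matrix n n ℝ}
    (hX : IsMoorePenrose S X) (hY : IsMoorePenrose S Y) : X = Y := by
  obtain ⟨hx1, hx2, hx3, hx4⟩ := hX
  obtain ⟨hy1, hy2, hy3, hy4⟩ := hY
  have hSX : S * X = S * Y := by
    calc S * X = (S * Y * S) * X := by rw [hy1]
      _ = (S * Y) * (S * X) := by simp only [mul_assoc]
      _ = (S * Y)ᵀ * (S * X)ᵀ := by rw [hy3, hx3]
      _ = ((S * X) * (S * Y))ᵀ := (transpose_mul _ _).symm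
      _ = ((S * X * S) * Y)ᵀ := by simp only [mul_assoc]
      _ = (S * Y)ᵀ := by rw [hx1]
      _ = S * Y := hy3
  have hXS : X * S = Y * S := by
    calc X * S = X * (S * Y * S) := by rw [hy1]
      _ = (X * S) * (Y * S) := by simp only [mul_assoc]
      _ = (X * S)ᵀ * (Y * S)ᵀ := by rw [hy4, hx4]
      _ = ((Y * S) * (X * S))ᵀ := (transpose_mul _ _).symm
      _ = (Y * (S * X * S))ᵀ := by simp only [mul_assoc]
      _ = (Y * S)ᵀ := by rw [hx1]
      _ = Y * S := hy4
  calc X = X * S * X := hx2.symm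
    _ = X * S * Y := by rw [mul_assoc, hSX, ← mul_assoc]
    _ = Y * S * Y := by rw [hXS]
    _ = Y := hy2

lemma charpoly_conj {n : Type*} [Fintype n] [DecidableEq n] (U M V : Matrix n n ℝ)
    (hUV : U * V = 1) : (U * M * V).charpoly = M.charpoly := by
  have hdet : (U.map (C : ℝ →+* ℝ[X])).det * (V.map (C : ℝ →+* ℝ[X])).det = 1 := by
    rw [← det_mul, ← Matrix.map_mul, hUV]; simp
  have hscal : U.map (C : ℝ →+* ℝ[X]) * (Matrix.scalar n (X : ℝ[X])) * V.map (C : ℝ →+* ℝ[X]) =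
      Matrix.scalar n (X : ℝ[X]) := by
    rw [(Matrix.scalar_commute (X : ℝ[X]) (fun r' => Commute.all _ _) (U.map C)).symm.eq,
      mul_assoc,
      ← Matrix.map_mul, hUV, Matrix.map_one _ (map_zero C) (map_one C), mul_one]
  have hkey : charmatrix (U * M * V) =
      U.map (C : ℝ →+* ℝ[X]) * charmatrix M * V.map (C : ℝ →+* ℝ[X]) := by
    unfold charmatrix
    rw [Matrix.mul_sub, Matrix.sub_mul, hscal]
    simp only [RingHom.mapMatrix_apply, Matrix.map_mul]
  rw [Matrix.charpoly, hkey, det_mul, det_mul, Matrix.charpoly]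
  calc (U.map (C : ℝ →+* ℝ[X])).det * (charmatrix M).det * (V.map (C : ℝ →+* ℝ[X])).det
      = (charmatrix M).det * ((U.map (C : ℝ →+* ℝ[X])).det * (V.map (C : ℝ →+* ℝ[X])).det) := by
        ring
    _ = (charmatrix M).det := by rw [hdet, mul_one]

lemma rank_fromBlocks_invertible {q k : Type*} [Fintype q] [DecidableEq q] [Fintype k]
    [DecidableEq k] (A : Matrix q q ℝ) (hA : IsUnit A.det) :
    (fromBlocks A 0 0 (0 : Matrix k k ℝ)).rank = Fintype.card q := by
  have hfac : fromBlocks A 0 0 (0 : Matrix k k ℝ) =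
      fromBlocks A 0 0 (1 : Matrix k k ℝ) *
        diagonal (Sum.elim (fun _ : q => (1 : ℝ)) (fun _ : k => 0)) := by
    rw [← Matrix.fromBlocks_diagonal, Matrix.fromBlocks_multiply]
    simp
  have hdet : IsUnit (fromBlocks A 0 0 (1 : Matrix k k ℝ)).det := by
    rw [Matrix.det_fromBlocks_zero₂₁]; simpa using hA
  rw [hfac, Matrix.rank_mul_eq_right_of_isUnit_det _ _ hdet, Matrix.rank_diagonal]
  have he : ∀ x : q ⊕ k, (Sum.elim (fun _ : q => (1 : ℝ)) (fun _ : k => 0) x ≠ 0) ↔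
      (Sum.elim (fun _ : q => True) (fun _ : k => False) x) := by
    rintro (a | b) <;> simp
  classical
  rw [Fintype.card_congr (((Equiv.subtypeEquivRight he).trans Equiv.subtypeSum).trans
    (Equiv.sumCongr (Equiv.subtypeUnivEquiv fun _ => trivial)
      (Equiv.subtypeEquivRight (fun _ => Iff.rfl))))]
  simp
  exact @Fintype.card_congr _ _ ?_ ?_ (@Equiv.sumEmpty q {x : k // False} ⟨fun x => x.2⟩)

lemma hasDerivAt_det_affine {q : Type*} [Fintype q] [DecidableEq q]
    (A₀ B Ainv : Matrix q q ℝ) (hInv : A₀ * Ainv = 1) (c : ℝ) :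
    HasDerivAt (fun t => (A₀ + (t - c) • B).det) (A₀.det * (Ainv * B).trace) c := by
  set M := Ainv * B with hM
  set P : ℝ[X] := (Matrix.det (1 + (X : ℝ[X]) • M.map C)).divX.divX with hP
  have hfac : ∀ t : ℝ, (A₀ + (t - c) • B).det =
      A₀.det * (1 + M.trace * (t - c) + P.eval (t - c) * (t - c) ^ 2) := by
    intro t
    have : A₀ + (t - c) • B = A₀ * (1 + (t - c) • M) := by
      rw [mul_add, mul_one, Matrix.mul_smul, hM, ← mul_assoc, hInv, one_mul]
    rw [this, det_mul, Matrix.det_one_add_smul]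
  have h1 : HasDerivAt (fun t : ℝ => t - c) 1 c := (hasDerivAt_id c).sub_const c
  have h0 : (c : ℝ) - c = 0 := sub_self c
  have hPd : HasDerivAt (fun t : ℝ => P.eval (t - c)) (P.derivative.eval 0 * 1) c := by
    have := HasDerivAt.comp (h₂ := fun y : ℝ => P.eval y) (h := fun t : ℝ => t - c)
      (x := c) (P.hasDerivAt (c - c)) h1
    simpa [h0, Function.comp_def] using this
  have hsq : HasDerivAt (fun t : ℝ => (t - c) ^ 2) (2 * (c - c) ^ 1 * 1) c :=
    (h1.pow 2).congr_deriv (by norm_num)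
  have hg : HasDerivAt
      (fun t : ℝ => 1 + M.trace * (t - c) + P.eval (t - c) * (t - c) ^ 2)
      (M.trace) c := by
    have := ((hasDerivAt_const c (1 : ℝ)).add (h1.const_mul M.trace)).add (hPd.mul hsq)
    exact this.congr_deriv (by simp [h0])
  have := hg.const_mul A₀.det
  refine HasDerivAt.congr_deriv ?_ rfl
  exact (this.congr_deriv rfl) |>.congr_of_eventuallyEq (by
    filter_upwards with t
    rw [hfac t])

lemma charpoly_zero' {k : Type*} [Fintype k] [DecidableEq k] :
    (0 : Matrix k k ℝ).charpoly = X ^ Fintype.card k := by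
  simp [Matrix.charpoly, charmatrix, Matrix.scalar_apply, Matrix.det_diagonal,
    Finset.prod_const, Finset.card_univ]

/-- With S_λ = Σ_j λ_j S_j, S_j symmetric PSD, λ_j > 0, and the null space of S_λ
independent of λ, the derivative of log|S_λ|₊ with respect to λ_j is tr(S_λ⁻ S_j). -/
theorem stmt_12 {p m : Type*} [Fintype p] [DecidableEq p] [Fintype m] [DecidableEq m]
    (Smat : m → Matrix p p ℝ) (hSm : ∀ j, (Smat j).PosSemidef)
    (lam : m → ℝ) (hlam : ∀ i, 0 < lam i)
    (hker : ∀ (v w : m → ℝ), (∀ i, 0 < v i) → (∀ i, 0 < w i) →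
      ∀ x : p → ℝ, (∑ i, v i • Smat i).mulVec x = 0 → (∑ i, w i • Smat i).mulVec x = 0)
    (Si : Matrix p p ℝ) (hSi : IsMoorePenrose (∑ i, lam i • Smat i) Si)
    (j : m) :
    HasDerivAt (fun t : ℝ => logpdet (∑ i, Function.update lam j t i • Smat i))
      (Matrix.trace (Si * Smat j)) (lam j) := by
  set S : Matrix p p ℝ := ∑ i, lam i • Smat i with hSdef
  -- S is hermitian
  have hH : S.IsHermitian := by
    show Sᴴ = S
    rw [hSdef, Matrix.conjTranspose_sum]
    exact Finset.sum_congr rfl fun i _ => by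
      rw [Matrix.conjTranspose_smul, star_trivial, (hSm i).1]
  -- transpose symmetry of Smat j
  have hSjt : (Smat j)ᵀ = Smat j := by
    rw [← Matrix.conjTranspose_eq_transpose_of_trivial, (hSm j).1]
  set U : Matrix p p ℝ := (hH.eigenvectorUnitary : Matrix p p ℝ) with hUdef
  set d : p → ℝ := hH.eigenvalues with hddef
  have hstarU : star U = Uᵀ := by
    rw [Matrix.star_eq_conjTranspose, Matrix.conjTranspose_eq_transpose_of_trivial]
  have hU2 : U * Uᵀ = 1 := by
    rw [← hstarU]; exact Matrix.mem_unitaryGroup_iff.mp (hH.eigenvectorUnitary).2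
  have hU1 : Uᵀ * U = 1 := by
    rw [← hstarU]; exact Matrix.mem_unitaryGroup_iff'.mp (hH.eigenvectorUnitary).2
  have hspec : S = U * diagonal d * Uᵀ := by
    rw [← hstarU, hddef, hUdef]
    have := hH.spectral_theorem
    rwa [RCLike.ofReal_real_eq_id, Function.id_comp] at this
  -- kernel of S is contained in kernel of Smat j
  have hkerj : ∀ x : p → ℝ, S.mulVec x = 0 → (Smat j).mulVec x = 0 := by
    intro x hx
    set w : m → ℝ := fun i => lam i + (if i = j then lam j else 0) with hwdef
    have hwpos : ∀ i, 0 < w i := by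
      intro i; rw [hwdef]; dsimp only; split
      · exact add_pos (hlam i) (hlam j)
      · simpa using hlam i
    have hterm : ∀ i, w i • Smat i = lam i • Smat i + (if i = j then lam j • Smat j else 0) := by
      intro i
      simp only [hwdef]
      rw [add_smul]
      congr 1
      split
      · next h => subst h; rfl
      · rw [zero_smul]
    have hwsum : (∑ i, w i • Smat i) = S + lam j • Smat j := by
      calc (∑ i, w i • Smat i)
          = ∑ i, (lam i • Smat i + (if i = j then lam j • Smat j else 0)) :=
            Finset.sum_congr rfl fun i _ => hterm i
        _ = S + lam j • Smat j := by rw [Finset.sum_add_distrib]; congr 1; simp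
    have h2 := hker lam w hlam hwpos x hx
    rw [hwsum, Matrix.add_mulVec, hx, zero_add, Matrix.smul_mulVec] at h2
    exact (smul_eq_zero.mp h2).resolve_left (ne_of_gt (hlam j))
  -- the conjugated matrix B
  set B : Matrix p p ℝ := Uᵀ * Smat j * U with hBdef
  have hBsymm : Bᵀ = B := by
    rw [hBdef, transpose_mul, transpose_mul, transpose_transpose, hSjt, ← mul_assoc]
  have hBcol : ∀ i : p, d i = 0 → ∀ l : p, B l i = 0 := by
    intro i hi l
    have hcol : S.mulVec (fun a => U a i) = 0 := by
      funext a
      have h1 : S.mulVec (fun b => U b i) a = (S * U) a i := by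
        simp [Matrix.mulVec, Matrix.mul_apply, dotProduct]
      rw [h1, hspec, mul_assoc (U * diagonal d), hU1, mul_one, Matrix.mul_diagonal, hi,
        mul_zero]
      rfl
    have hj := hkerj _ hcol
    have h2 : ∀ a, (Smat j * U) a i = 0 := by
      intro a
      have := congrFun hj a
      simpa [Matrix.mulVec, dotProduct, Matrix.mul_apply] using this
    have h3 : B l i = ∑ a, Uᵀ l a * (Smat j * U) a i := by
      rw [hBdef, mul_assoc, Matrix.mul_apply]
    rw [h3]
    exact Finset.sum_eq_zero fun a _ => by rw [h2 a, mul_zero]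
  have hBrow : ∀ i : p, d i = 0 → ∀ l : p, B i l = 0 := by
    intro i hi l
    have := congrFun (congrFun hBsymm l) i
    rw [Matrix.transpose_apply] at this
    rw [this]
    exact hBcol i hi l
  -- sum as affine family
  have hupdate : ∀ t : ℝ,
      (∑ i, Function.update lam j t i • Smat i) = S + (t - lam j) • Smat j := by
    intro t
    have h1 : (fun i => Function.update lam j t i • Smat i) =
        Function.update (fun i => lam i • Smat i) j (t • Smat j) := by
      funext i
      by_cases h : i = j
      · subst h; simp
      · simp [Function.update_of_ne h]
    have h2 : S = lam j • Smat j + ∑ i ∈ Finset.univ \ {j}, lam i • Smat i := by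
      rw [hSdef, ← Finset.sum_update_of_mem (Finset.mem_univ j), Function.update_eq_self]
    rw [h1, Finset.sum_update_of_mem (Finset.mem_univ j), h2, sub_smul]
    abel
  -- block structure
  classical
  set C : ℝ → Matrix p p ℝ := fun t => diagonal d + (t - lam j) • B with hCdef
  have hrep : ∀ t : ℝ, S + (t - lam j) • Smat j = U * C t * Uᵀ := by
    intro t
    rw [hCdef]
    dsimp only
    rw [Matrix.mul_add, Matrix.add_mul, ← hspec, Matrix.mul_smul, Matrix.smul_mul, hBdef]
    congr 1
    rw [← mul_assoc, ← mul_assoc, hU2, one_mul, mul_assoc, hU2, mul_one]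
  set q := {i : p // d i ≠ 0} with hqdef
  set k := {i : p // ¬ d i ≠ 0} with hkdef
  set e : q ⊕ k ≃ p := Equiv.sumCompl (fun i => d i ≠ 0) with hedef
  set B' : Matrix q q ℝ := B.submatrix (↑·) (↑·) with hB'def
  set A : ℝ → Matrix q q ℝ :=
    fun t => diagonal (fun a : q => d a.1) + (t - lam j) • B' with hAdef
  have hblock : ∀ t : ℝ, (C t).submatrix e e = fromBlocks (A t) 0 0 0 := by
    intro t
    ext x y
    cases x with
    | inl a =>
      cases y with
      | inl b =>
        show C t a.1 b.1 = A t a b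
        rw [hCdef, hAdef]
        dsimp only
        simp only [Matrix.add_apply, Matrix.smul_apply, hB'def, Matrix.submatrix_apply]
        congr 1
        by_cases hab : a = b
        · subst hab; simp
        · rw [Matrix.diagonal_apply_ne _ (fun hc => hab (Subtype.ext hc)),
            Matrix.diagonal_apply_ne _ hab]
      | inr b =>
        show C t a.1 b.1 = 0
        have hb : d b.1 = 0 := not_not.mp b.2
        have hne : a.1 ≠ b.1 := fun hc => a.2 (hc ▸ hb)
        rw [hCdef]
        dsimp only
        rw [Matrix.add_apply, Matrix.smul_apply, Matrix.diagonal_apply_ne _ hne,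
          hBcol b.1 hb a.1, smul_zero, add_zero]
    | inr a =>
      have ha : d a.1 = 0 := not_not.mp a.2
      cases y with
      | inl b =>
        show C t a.1 b.1 = 0
        have hne : a.1 ≠ b.1 := fun hc => b.2 (hc ▸ ha)
        rw [hCdef]
        dsimp only
        rw [Matrix.add_apply, Matrix.smul_apply, Matrix.diagonal_apply_ne _ hne,
          hBrow a.1 ha b.1, smul_zero, add_zero]
      | inr b =>
        show C t a.1 b.1 = 0
        rw [hCdef]
        dsimp only
        rw [Matrix.add_apply, Matrix.smul_apply, hBrow a.1 ha b.1, smul_zero, add_zero]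
        by_cases hab : a.1 = b.1
        · rw [hab, Matrix.diagonal_apply_eq]
          exact not_not.mp b.2
        · exact Matrix.diagonal_apply_ne _ hab
  have hcardqk : Fintype.card p = Fintype.card q + Fintype.card k := by
    rw [← Fintype.card_sum]
    exact (Fintype.card_congr e).symm
  have hdetUt : IsUnit Uᵀ.det := IsUnit.of_mul_eq_one _ (by rw [← det_mul, hU1, det_one])
  have hdetU : IsUnit U.det := IsUnit.of_mul_eq_one _ (by rw [← det_mul, hU2, det_one])
  have hreindex : ∀ t : ℝ, (C t).charpoly = ((C t).submatrix e e).charpoly := by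
    intro t
    have h4 : Matrix.reindex e e ((C t).submatrix e e) = C t := by
      ext x y
      simp [Matrix.reindex_apply, Matrix.submatrix_apply]
    rw [← Matrix.charpoly_reindex e ((C t).submatrix e e), h4]
  have hcharS : ∀ t : ℝ, (S + (t - lam j) • Smat j).charpoly =
      (A t).charpoly * X ^ (Fintype.card k) := by
    intro t
    rw [hrep t, charpoly_conj U (C t) Uᵀ hU2, hreindex t, hblock t,
      Matrix.charpoly_fromBlocks_zero₂₁, charpoly_zero']
  have hrankS : ∀ t : ℝ, IsUnit (A t).det →
      (S + (t - lam j) • Smat j).rank = Fintype.card q := by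
    intro t ht
    rw [hrep t, Matrix.rank_mul_eq_left_of_isUnit_det _ _ hdetUt,
      Matrix.rank_mul_eq_right_of_isUnit_det _ _ hdetU,
      ← Matrix.rank_submatrix (C t) e e, hblock t, rank_fromBlocks_invertible _ ht]
  have hlogpdet : ∀ t : ℝ, IsUnit (A t).det →
      logpdet (∑ i, Function.update lam j t i • Smat i) = Real.log ((A t).det) := by
    intro t ht
    rw [hupdate t]
    unfold logpdet
    rw [hcharS t, hrankS t ht, hcardqk, Nat.add_sub_cancel_left,
      Polynomial.coeff_mul_X_pow', if_pos le_rfl, Nat.sub_self]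
    have h5 : |(A t).charpoly.coeff 0| = |(A t).det| := by
      rw [Matrix.det_eq_sign_charpoly_coeff, abs_mul, abs_pow, abs_neg, abs_one, one_pow,
        one_mul]
    rw [h5, Real.log_abs]
  set A₀ : Matrix q q ℝ := diagonal (fun a : q => d a.1) with hA₀def
  set A₀inv : Matrix q q ℝ := diagonal (fun a : q => (d a.1)⁻¹) with hA₀invdef
  have hInv : A₀ * A₀inv = 1 := by
    rw [hA₀def, hA₀invdef, Matrix.diagonal_mul_diagonal,
      show (fun a : q => d a.1 * (d a.1)⁻¹) = fun _ => (1 : ℝ) from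
        funext fun a => mul_inv_cancel₀ a.2, Matrix.diagonal_one]
  have hA0 : A (lam j) = A₀ := by
    rw [hAdef]; dsimp only; rw [sub_self, zero_smul, add_zero]
  have hdetA₀ : A₀.det ≠ 0 := by
    rw [hA₀def, Matrix.det_diagonal]
    exact Finset.prod_ne_zero_iff.mpr fun a _ => a.2
  have hder : HasDerivAt (fun t => (A t).det) (A₀.det * (A₀inv * B').trace) (lam j) :=
    hasDerivAt_det_affine A₀ B' A₀inv hInv (lam j)
  have hne : (A (lam j)).det ≠ 0 := by rw [hA0]; exact hdetA₀
  have hlog : HasDerivAt (fun t => Real.log ((A t).det)) ((A₀inv * B').trace) (lam j) := by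
    have h6 := hder.log hne
    have h7 : A₀.det * (A₀inv * B').trace / (A (lam j)).det = (A₀inv * B').trace := by
      rw [hA0]; exact mul_div_cancel_left₀ _ hdetA₀
    rwa [h7] at h6
  have hev : ∀ᶠ t in nhds (lam j), IsUnit (A t).det := by
    filter_upwards [hder.continuousAt.eventually_ne hne] with t ht using
      isUnit_iff_ne_zero.mpr ht
  have hmain : HasDerivAt (fun t : ℝ => logpdet (∑ i, Function.update lam j t i • Smat i))
      ((A₀inv * B').trace) (lam j) := by
    refine hlog.congr_of_eventuallyEq ?_
    filter_upwards [hev] with t ht using hlogpdet t ht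
  suffices hval : Matrix.trace (Si * Smat j) = (A₀inv * B').trace by rw [hval]; exact hmain
  set dplus : p → ℝ := fun i => if d i = 0 then 0 else (d i)⁻¹ with hdplusdef
  set Si₀ : Matrix p p ℝ := U * diagonal dplus * Uᵀ with hSi₀def
  have hmul : ∀ v w : p → ℝ, (U * diagonal v * Uᵀ) * (U * diagonal w * Uᵀ) =
      U * diagonal (fun i => v i * w i) * Uᵀ := by
    intro v w
    calc (U * diagonal v * Uᵀ) * (U * diagonal w * Uᵀ)
        = U * diagonal v * ((Uᵀ * U) * (diagonal w * Uᵀ)) := by simp only [mul_assoc]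
      _ = U * (diagonal v * (diagonal w * Uᵀ)) := by rw [hU1, one_mul, mul_assoc]
      _ = U * (diagonal v * diagonal w) * Uᵀ := by simp only [mul_assoc]
      _ = U * diagonal (fun i => v i * w i) * Uᵀ := by rw [Matrix.diagonal_mul_diagonal]
  have hT : ∀ v : p → ℝ, (U * diagonal v * Uᵀ)ᵀ = U * diagonal v * Uᵀ := by
    intro v
    rw [transpose_mul, transpose_mul, transpose_transpose, Matrix.diagonal_transpose,
      mul_assoc]
  have hMP : IsMoorePenrose S Si₀ := by
    refine ⟨?_, ?_, ?_, ?_⟩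
    · rw [hspec, hSi₀def, hmul, hmul]
      refine congrArg (fun v => U * diagonal v * Uᵀ) (funext fun i => ?_)
      by_cases h : d i = 0
      · simp [hdplusdef, h]
      · rw [hdplusdef]; simp [h]
    · rw [hspec, hSi₀def, hmul, hmul]
      refine congrArg (fun v => U * diagonal v * Uᵀ) (funext fun i => ?_)
      by_cases h : d i = 0
      · simp [hdplusdef, h]
      · rw [hdplusdef]; simp [h]
    · rw [hspec, hSi₀def, hmul, hT]
    · rw [hspec, hSi₀def, hmul, hT]
  have hSieq : Si = Si₀ := mp_unique hSi hMP
  have htr1 : Matrix.trace (Si * Smat j) = ∑ i, dplus i * B i i := by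
    rw [hSieq, hSi₀def]
    have h8 : U * diagonal dplus * Uᵀ * Smat j =
        U * (diagonal dplus * (Uᵀ * Smat j)) := by simp only [mul_assoc]
    rw [h8, Matrix.trace_mul_comm U (diagonal dplus * (Uᵀ * Smat j))]
    have h9 : diagonal dplus * (Uᵀ * Smat j) * U = diagonal dplus * B := by
      rw [hBdef]; simp only [mul_assoc]
    rw [h9, Matrix.trace]
    refine Finset.sum_congr rfl fun i _ => ?_
    rw [Matrix.diag_apply, Matrix.diagonal_mul]
  have htr2 : (A₀inv * B').trace = ∑ a : q, (d a.1)⁻¹ * B a.1 a.1 := by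
    rw [hA₀invdef, Matrix.trace]
    refine Finset.sum_congr rfl fun a _ => ?_
    rw [Matrix.diag_apply, Matrix.diagonal_mul, hB'def]
    rfl
  rw [htr1, htr2]
  have h10 : ∀ a : q, (d a.1)⁻¹ * B a.1 a.1 = dplus a.1 * B a.1 a.1 := by
    intro a
    rw [hdplusdef]
    simp only [if_neg a.2]
  rw [Finset.sum_congr rfl fun a _ => h10 a,
    ← Finset.sum_subtype (Finset.univ.filter (fun i => d i ≠ 0))
      (fun i => by simp) (fun i => dplus i * B i i)]
  refine (Finset.sum_filter_of_ne fun i _ hne0 => ?_).symm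
  intro h0
  apply hne0
  rw [hdplusdef]
  simp [h0]
end

section
/- Let λ* be defined by the generalized Fellner–Schall update λ*_j = σ² [tr(S_λ⁻ S_j) − tr((XᵀX + S_λ)⁻¹ S_j)] / (β̂_λᵀ S_j β̂_λ) · λ_j (assuming β̂_λᵀ S_j β̂_λ > 0 for all j). Then the sign of λ*_j − λ_j equals the sign of ∂l_r/∂λ_j, where ∂l_r/∂λ_j = ½ tr(S_λ⁻ S_j) − ½ tr((XᵀX + S_λ)⁻¹ S_j) − β̂_λᵀ S_j β̂_λ/(2σ²). Consequently Δ = λ* − λ satisfies Δᵀ ∇l_r ≥ 0 with equality only if ∇l_r = 0, so Δ is an ascent direction for l_r unless λ is a stationary point. -/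
open Matrix

/-- For the generalized Fellner–Schall update
λ*_j = σ² [tr(S_λ⁻ S_j) − tr((XᵀX+S_λ)⁻¹ S_j)]/(β̂ᵀ S_j β̂) · λ_j, the sign of λ*_j − λ_j is the
sign of ∂l_r/∂λ_j = ½tr(S_λ⁻ S_j) − ½tr((XᵀX+S_λ)⁻¹ S_j) − β̂ᵀS_jβ̂/(2σ²); hence
Δᵀ∇l_r ≥ 0, with equality only if ∇l_r = 0, so Δ = λ* − λ is an ascent direction unless λ is a
stationary point. -/
theorem stmt_14 {n p m : Type*} [Fintype n] [Fintype p] [DecidableEq p] [Fintype m]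
    (X : Matrix n p ℝ) (Smat : m → Matrix p p ℝ) (hSm : ∀ j, (Smat j).PosSemidef)
    (lam : m → ℝ) (hlam : ∀ j, 0 < lam j)
    (Slam : Matrix p p ℝ) (hSlam : Slam = ∑ j, lam j • Smat j)
    (hpd : (Xᵀ * X + Slam).PosDef)
    (Si : Matrix p p ℝ) (hSi : IsMoorePenrose Slam Si)
    (bhat : p → ℝ) (σ2 : ℝ) (hσ : 0 < σ2)
    (htr : ∀ j, 0 < Matrix.trace (Si * Smat j)
      - Matrix.trace (((Xᵀ * X + Slam)⁻¹) * Smat j))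
    (hb : ∀ j, 0 < bhat ⬝ᵥ ((Smat j).mulVec bhat))
    (g lamstar : m → ℝ)
    (hg : ∀ j, g j = Matrix.trace (Si * Smat j) / 2
      - Matrix.trace (((Xᵀ * X + Slam)⁻¹) * Smat j) / 2
      - bhat ⬝ᵥ ((Smat j).mulVec bhat) / (2 * σ2))
    (hstar : ∀ j, lamstar j = σ2 * (Matrix.trace (Si * Smat j)
      - Matrix.trace (((Xᵀ * X + Slam)⁻¹) * Smat j)) / (bhat ⬝ᵥ ((Smat j).mulVec bhat)) * lam j) :
    (∀ j, Real.sign (lamstar j - lam j) = Real.sign (g j)) ∧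
    0 ≤ ∑ j, (lamstar j - lam j) * g j ∧
    ((∑ j, (lamstar j - lam j) * g j) = 0 → ∀ j, g j = 0) := by
  set t1 : m → ℝ := fun j => Matrix.trace (Si * Smat j) with ht1
  set t2 : m → ℝ := fun j => Matrix.trace (((Xᵀ * X + Slam)⁻¹) * Smat j) with ht2
  set T : m → ℝ := fun j => t1 j - t2 j with hT
  set b : m → ℝ := fun j => bhat ⬝ᵥ ((Smat j).mulVec bhat) with hbdef
  have hbpos : ∀ j, 0 < b j := hb
  have hdiff : ∀ j, lamstar j - lam j = lam j * (σ2 * T j - b j) / b j := by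
    intro j
    have e1 : Matrix.trace (Si * Smat j) = t1 j := rfl
    have e2 : Matrix.trace (((Xᵀ * X + Slam)⁻¹) * Smat j) = t2 j := rfl
    have hb0 := (hbpos j).ne'
    rw [hstar j, e1, e2]
    show σ2 * (t1 j - t2 j) / b j * lam j - lam j = _
    field_simp
    ring
  have hgc : ∀ j, g j = (σ2 * T j - b j) / (2 * σ2) := by
    intro j
    have e1 : Matrix.trace (Si * Smat j) = t1 j := rfl
    have e2 : Matrix.trace (((Xᵀ * X + Slam)⁻¹) * Smat j) = t2 j := rfl
    rw [hg j, e1, e2]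
    show t1 j / 2 - t2 j / 2 - b j / (2 * σ2) = _
    field_simp
    ring
  have hsign : ∀ j, Real.sign (lamstar j - lam j) = Real.sign (g j) := by
    intro j
    rw [hdiff j, hgc j]
    rcases lt_trichotomy (σ2 * T j - b j) 0 with h | h | h
    · rw [Real.sign_of_neg, Real.sign_of_neg]
      · exact div_neg_of_neg_of_pos h (by linarith)
      · exact div_neg_of_neg_of_pos (mul_neg_of_pos_of_neg (hlam j) h) (hbpos j)
    · simp [h]
    · rw [Real.sign_of_pos, Real.sign_of_pos]
      · exact div_pos h (by linarith)
      · exact div_pos (mul_pos (hlam j) h) (hbpos j)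
  have hterm : ∀ j, 0 ≤ (lamstar j - lam j) * g j := by
    intro j
    rw [hdiff j, hgc j]
    have : lam j * (σ2 * T j - b j) / b j * ((σ2 * T j - b j) / (2 * σ2))
        = (lam j / (b j * (2 * σ2))) * (σ2 * T j - b j) ^ 2 := by
      field_simp
    rw [this]
    exact mul_nonneg (div_nonneg (hlam j).le (mul_nonneg (hbpos j).le (by linarith)))
      (sq_nonneg _)
  refine ⟨hsign, Finset.sum_nonneg fun j _ => hterm j, fun hsum j => ?_⟩
  have hall := (Finset.sum_eq_zero_iff_of_nonneg (fun j _ => hterm j)).mp hsum j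
    (Finset.mem_univ j)
  have hc : σ2 * T j - b j = 0 := by
    by_contra hc
    have h0 : (0:ℝ) < (lam j / (b j * (2 * σ2))) * (σ2 * T j - b j) ^ 2 :=
      mul_pos (div_pos (hlam j) (mul_pos (hbpos j) (by linarith)))
        (pow_two_pos_of_ne_zero hc)
    rw [hdiff j, hgc j] at hall
    have heq : lam j * (σ2 * T j - b j) / b j * ((σ2 * T j - b j) / (2 * σ2))
        = (lam j / (b j * (2 * σ2))) * (σ2 * T j - b j) ^ 2 := by
      have := (hbpos j).ne'
      field_simp
    rw [heq] at hall
    linarith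
  rw [hgc j, hc, zero_div]
end
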